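/- Let (X^n, Y^n) be jointly distributed random sequences with finite alphabets, and let S be a discrete random variable on a finite alphabet 𝒮, jointly distributed with (X^n, Y^n). Then |I(X^n→Y^n) − I(X^n→Y^n | S)| ≤ H(S) ≤ log|𝒮|. -/

import Mathlib

open Finset

noncomputable section

-- Probability of the event `E` under the pmf `p` on a finite sample space `Ω`.
open Classical in
def pr {Ω : Type*} [Fintype Ω] (p : Ω → ℝ) (E : Ω → Prop) : ℝ :=
  ∑ ω, if E ω then p ω else 0

-- Shannon entropy `H(U)` (pointwise form).
def entropy {Ω α : Type*} [Fintype Ω] (p : Ω → ℝ) (U : Ω → α) : ℝ :=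
  -∑ ω, p ω * Real.log (pr p (fun ω' => U ω' = U ω))

-- Conditional Shannon entropy `H(U | V)`.
def condEntropy {Ω α β : Type*} [Fintype Ω] (p : Ω → ℝ) (U : Ω → α) (V : Ω → β) : ℝ :=
  -∑ ω, p ω * Real.log
      (pr p (fun ω' => U ω' = U ω ∧ V ω' = V ω) / pr p (fun ω' => V ω' = V ω))

-- Mutual information `I(U ; V)`.
def mutualInfo {Ω α β : Type*} [Fintype Ω] (p : Ω → ℝ) (U : Ω → α) (V : Ω → β) : ℝ :=
  ∑ ω, p ω * Real.log
      (pr p (fun ω' => U ω' = U ω ∧ V ω' = V ω) /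
        (pr p (fun ω' => U ω' = U ω) * pr p (fun ω' => V ω' = V ω)))

-- Conditional mutual information `I(U ; V | W)`.
def condMutualInfo {Ω α β γ : Type*} [Fintype Ω] (p : Ω → ℝ)
    (U : Ω → α) (V : Ω → β) (W : Ω → γ) : ℝ :=
  ∑ ω, p ω * Real.log
      ((pr p (fun ω' => U ω' = U ω ∧ V ω' = V ω ∧ W ω' = W ω) *
          pr p (fun ω' => W ω' = W ω)) /
        (pr p (fun ω' => U ω' = U ω ∧ W ω' = W ω) *
          pr p (fun ω' => V ω' = V ω ∧ W ω' = W ω)))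

-- The prefix `(X_0, …, X_{i-1})` of a random sequence `X`.
def prefixSeq {Ω 𝒳 : Type*} (X : Ω → ℕ → 𝒳) (i : ℕ) : Ω → (Fin i → 𝒳) :=
  fun ω j => X ω (j : ℕ)

-- Directed information `I(X^n → Y^n) = ∑_{i=1}^n I(X^i ; Y_i | Y^{i-1})` (0-indexed).
def directedInfo {Ω 𝒳 𝒴 : Type*} [Fintype Ω] (p : Ω → ℝ)
    (X : Ω → ℕ → 𝒳) (Y : Ω → ℕ → 𝒴) (n : ℕ) : ℝ :=
  ∑ i ∈ Finset.range n,
    condMutualInfo p (prefixSeq X (i + 1)) (fun ω => Y ω i) (prefixSeq Y i)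

/-! For `W = Y^{i-1}` the per-step difference `I(X^i; Y_i | W) - I(X^i; Y_i | W, S)` equals
`I(S; Y_i | W) - I(S; Y_i | X^i, W)`, as both sides expand into the same four conditional
entropies of `Y_i`. Summed over `i`, the first terms telescope to `H(S) - H(S | Y^n)` and the
second ones, since `(X^{i+1}, Y^i)` determines `(Y_i, X^i, Y^{i-1})`, to at most
`H(S | X_1) - H(S | X^{n+1}, Y^n)`. Both sums therefore lie in `[0, H(S)]`, which bounds their
difference. Nonnegativity of conditional mutual information and `H(S) ≤ log |𝒮|` are Gibbs'
inequality, i.e. `log x ≤ x - 1`. -/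

section Probability

variable {Ω : Type*} [Fintype Ω] {p : Ω → ℝ}

lemma pr_nonneg (hp0 : ∀ ω, 0 ≤ p ω) (E : Ω → Prop) : 0 ≤ pr p E :=
  sum_nonneg fun ω _ => by split_ifs <;> simp [hp0 ω]

lemma pr_congr {E F : Ω → Prop} (h : ∀ ω, E ω ↔ F ω) : pr p E = pr p F := by
  rw [show E = F from funext fun ω => propext (h ω)]

lemma pr_mono (hp0 : ∀ ω, 0 ≤ p ω) {E F : Ω → Prop} (h : ∀ ω, E ω → F ω) :
    pr p E ≤ pr p F :=
  sum_le_sum fun ω _ => by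
    split_ifs with hE hF
    exacts [le_rfl, absurd (h ω hE) hF, hp0 ω, le_rfl]

lemma pr_pos (hp0 : ∀ ω, 0 ≤ p ω) {E : Ω → Prop} {ω : Ω} (hω : 0 < p ω) (hE : E ω) :
    0 < pr p E := by
  classical
  refine hω.trans_le ?_
  calc p ω = if E ω then p ω else 0 := (if_pos hE).symm
    _ ≤ pr p E := single_le_sum (f := fun ω' => if E ω' then p ω' else 0)
        (fun ω' _ => by split_ifs <;> simp [hp0 ω']) (mem_univ ω)

lemma sum_mul_comp_eq_sum_pr_mul {κ : Type*} [Fintype κ] (f : Ω → κ) (F : κ → ℝ) :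
    ∑ ω, p ω * F (f ω) = ∑ t, pr p (fun ω => f ω = t) * F t := by
  classical
  simp only [pr, sum_mul, ite_mul, zero_mul]
  rw [sum_comm]
  simp

lemma sum_pr_eq_one {κ : Type*} [Fintype κ] (hp1 : ∑ ω, p ω = 1) (f : Ω → κ) :
    ∑ t, pr p (fun ω => f ω = t) = 1 := by
  simpa [hp1] using (sum_mul_comp_eq_sum_pr_mul (p := p) f fun _ => 1).symm

lemma sum_pr_and_eq {α γ : Type*} [Fintype α] (U : Ω → α) (W : Ω → γ) (w : γ) :
    ∑ u, pr p (fun ω => U ω = u ∧ W ω = w) = pr p (fun ω => W ω = w) := by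
  classical
  simp only [pr]
  rw [sum_comm]
  refine sum_congr rfl fun ω _ => ?_
  by_cases hW : W ω = w <;> simp [hW]

end Probability

section Gibbs

variable {Ω : Type*} [Fintype Ω] {p : Ω → ℝ}

lemma sum_mul_log_le_sum_mul_sub_one (hp0 : ∀ ω, 0 ≤ p ω) (hp1 : ∑ ω, p ω = 1) {f : Ω → ℝ}
    (hf : ∀ ω, 0 < p ω → 0 < f ω) :
    ∑ ω, p ω * Real.log (f ω) ≤ ∑ ω, p ω * f ω - 1 := by
  rw [← hp1, ← sum_sub_distrib]
  refine sum_le_sum fun ω _ => ?_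
  rcases (hp0 ω).eq_or_lt with h0 | h0
  · simp [← h0]
  · rw [← mul_sub_one]
    exact mul_le_mul_of_nonneg_left (Real.log_le_sub_one_of_pos (hf ω h0)) h0.le

lemma sum_mul_div_pr_le {κ : Type*} [Fintype κ] (f : Ω → κ) {G : κ → ℝ} (hG : ∀ t, 0 ≤ G t) :
    ∑ ω, p ω * (G (f ω) / pr p (fun ω' => f ω' = f ω)) ≤ ∑ t, G t := by
  refine (sum_mul_comp_eq_sum_pr_mul f fun t => G t / pr p (fun ω' => f ω' = t)).trans_le
    (sum_le_sum fun t _ => ?_)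
  rcases eq_or_ne (pr p fun ω => f ω = t) 0 with h | h
  · simp [h, hG t]
  · rw [mul_div_cancel₀ _ h]

lemma entropy_le_log_card {α : Type*} [Fintype α] (hp0 : ∀ ω, 0 ≤ p ω) (hp1 : ∑ ω, p ω = 1)
    (U : Ω → α) : entropy p U ≤ Real.log (Fintype.card α) := by
  obtain ⟨ω₀, -, -⟩ := exists_ne_zero_of_sum_ne_zero (hp1 ▸ one_ne_zero : ∑ ω, p ω ≠ 0)
  have : Nonempty α := ⟨U ω₀⟩
  set N : ℝ := (Fintype.card α : ℝ)
  have hN : 0 < N := by positivity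
  have hterm : ∀ ω, p ω * Real.log (N⁻¹ / pr p (fun ω' => U ω' = U ω))
      = -(p ω * Real.log (pr p (fun ω' => U ω' = U ω))) - p ω * Real.log N := by
    intro ω
    rcases (hp0 ω).eq_or_lt with h0 | h0
    · simp [← h0]
    · have hq : 0 < pr p (fun ω' => U ω' = U ω) := pr_pos hp0 h0 rfl
      rw [Real.log_div (inv_ne_zero hN.ne') hq.ne', Real.log_inv]
      ring
  have hsum : entropy p U - Real.log N
      = ∑ ω, p ω * Real.log (N⁻¹ / pr p (fun ω' => U ω' = U ω)) := by
    simp only [hterm, sum_sub_distrib, sum_neg_distrib, ← sum_mul, hp1, entropy, one_mul]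
  have hbound : ∑ ω, p ω * (N⁻¹ / pr p (fun ω' => U ω' = U ω)) ≤ 1 := by
    refine (sum_mul_div_pr_le U fun _ => (inv_pos.2 hN).le).trans_eq ?_
    simp [N, hN.ne']
  have hgibbs := sum_mul_log_le_sum_mul_sub_one hp0 hp1
    (f := fun ω => N⁻¹ / pr p (fun ω' => U ω' = U ω))
    fun ω h => div_pos (inv_pos.2 hN) (pr_pos (E := fun ω' => U ω' = U ω) hp0 h rfl)
  linarith

lemma sum_pr_mul_pr_div_pr_eq_one {α β γ : Type*} [Fintype α] [Fintype β] [Fintype γ]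
    (hp1 : ∑ ω, p ω = 1) (U : Ω → α) (V : Ω → β) (W : Ω → γ) :
    ∑ t : α × β × γ, pr p (fun ω => U ω = t.1 ∧ W ω = t.2.2) *
      pr p (fun ω => V ω = t.2.1 ∧ W ω = t.2.2) / pr p (fun ω => W ω = t.2.2) = 1 := by
  calc _ = ∑ w, (∑ u, pr p (fun ω => U ω = u ∧ W ω = w)) *
          (∑ v, pr p (fun ω => V ω = v ∧ W ω = w)) / pr p (fun ω => W ω = w) := by
        simp only [Fintype.sum_prod_type, sum_mul_sum, sum_div]
        conv_rhs => rw [sum_comm]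
        exact sum_congr rfl fun u _ => sum_comm
    _ = ∑ w, pr p (fun ω => W ω = w) := by simp only [sum_pr_and_eq, mul_self_div_self]
    _ = 1 := sum_pr_eq_one hp1 W

lemma condMutualInfo_nonneg {α β γ : Type*} [Fintype α] [Fintype β] [Fintype γ]
    (hp0 : ∀ ω, 0 ≤ p ω) (hp1 : ∑ ω, p ω = 1) (U : Ω → α) (V : Ω → β) (W : Ω → γ) :
    0 ≤ condMutualInfo p U V W := by
  set G : α × β × γ → ℝ := fun t => pr p (fun ω => U ω = t.1 ∧ W ω = t.2.2) *
    pr p (fun ω => V ω = t.2.1 ∧ W ω = t.2.2) / pr p (fun ω => W ω = t.2.2)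
  set f : Ω → ℝ := fun ω =>
    G (U ω, V ω, W ω) / pr p (fun ω' => (U ω', V ω', W ω') = (U ω, V ω, W ω))
  have hcmi : condMutualInfo p U V W = -∑ ω, p ω * Real.log (f ω) := by
    rw [condMutualInfo, ← sum_neg_distrib]
    refine sum_congr rfl fun ω _ => ?_
    rw [← mul_neg, ← Real.log_inv, inv_div, div_div_eq_mul_div]
    simp only [Prod.ext_iff]
  have hf : ∀ ω, 0 < p ω → 0 < f ω := fun ω h => by
    have := pr_pos (E := fun ω' => U ω' = U ω ∧ W ω' = W ω) hp0 h ⟨rfl, rfl⟩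
    have := pr_pos (E := fun ω' => V ω' = V ω ∧ W ω' = W ω) hp0 h ⟨rfl, rfl⟩
    have := pr_pos (E := fun ω' => W ω' = W ω) hp0 h rfl
    have := pr_pos (E := fun ω' => (U ω', V ω', W ω') = (U ω, V ω, W ω)) hp0 h rfl
    positivity
  have hG : ∀ t, 0 ≤ G t := fun t => by
    have := pr_nonneg hp0 (fun ω => U ω = t.1 ∧ W ω = t.2.2)
    have := pr_nonneg hp0 (fun ω => V ω = t.2.1 ∧ W ω = t.2.2)
    have := pr_nonneg hp0 (fun ω => W ω = t.2.2)
    positivity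
  have hlog := sum_mul_log_le_sum_mul_sub_one hp0 hp1 hf
  have hsum : ∑ ω, p ω * f ω ≤ ∑ t, G t := sum_mul_div_pr_le (fun ω => (U ω, V ω, W ω)) hG
  have hG1 : ∑ t, G t = 1 := sum_pr_mul_pr_div_pr_eq_one hp1 U V W
  linarith

end Gibbs

section Entropy

variable {Ω α β γ : Type*} [Fintype Ω] {p : Ω → ℝ}

lemma condEntropy_nonneg (hp0 : ∀ ω, 0 ≤ p ω) (U : Ω → α) (V : Ω → β) :
    0 ≤ condEntropy p U V := by
  rw [condEntropy, neg_nonneg]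
  refine sum_nonpos fun ω _ => mul_nonpos_of_nonneg_of_nonpos (hp0 ω) (Real.log_nonpos ?_ ?_)
  · exact div_nonneg (pr_nonneg hp0 _) (pr_nonneg hp0 _)
  · exact div_le_one_of_le₀ (pr_mono hp0 fun ω' h => h.2) (pr_nonneg hp0 _)

lemma condEntropy_congr (U : Ω → α) {W : Ω → β} {W' : Ω → γ}
    (h : ∀ ω ω', W ω' = W ω ↔ W' ω' = W' ω) :
    condEntropy p U W = condEntropy p U W' := by
  simp only [condEntropy, h]

lemma condEntropy_eq_entropy_of_forall_eq (hp1 : ∑ ω, p ω = 1) (U : Ω → α) {W : Ω → β}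
    (hW : ∀ ω ω', W ω' = W ω) : condEntropy p U W = entropy p U := by
  refine congrArg Neg.neg (sum_congr rfl fun ω _ => ?_)
  have hUW : pr p (fun ω' => U ω' = U ω ∧ W ω' = W ω) = pr p (fun ω' => U ω' = U ω) :=
    pr_congr fun ω' => and_iff_left (hW ω ω')
  have hW1 : pr p (fun ω' => W ω' = W ω) = 1 := by
    rw [pr_congr (F := fun _ => True) fun ω' => iff_true_intro (hW ω ω')]
    simpa [pr] using hp1
  rw [hUW, hW1, div_one]

lemma condMutualInfo_eq_condEntropy_sub (hp0 : ∀ ω, 0 ≤ p ω)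
    (U : Ω → α) (V : Ω → β) (W : Ω → γ) :
    condMutualInfo p U V W = condEntropy p V W - condEntropy p V (fun ω => (U ω, W ω)) := by
  rw [condMutualInfo, condEntropy, condEntropy, neg_sub_neg, ← sum_sub_distrib]
  refine sum_congr rfl fun ω _ => ?_
  rcases (hp0 ω).eq_or_lt with h0 | h0
  · simp [← h0]
  have hUVW : 0 < pr p (fun ω' => U ω' = U ω ∧ V ω' = V ω ∧ W ω' = W ω) :=
    pr_pos hp0 h0 ⟨rfl, rfl, rfl⟩
  have hW : 0 < pr p (fun ω' => W ω' = W ω) := pr_pos hp0 h0 rfl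
  have hUW : 0 < pr p (fun ω' => U ω' = U ω ∧ W ω' = W ω) := pr_pos hp0 h0 ⟨rfl, rfl⟩
  have hVW : 0 < pr p (fun ω' => V ω' = V ω ∧ W ω' = W ω) := pr_pos hp0 h0 ⟨rfl, rfl⟩
  have hVUW : pr p (fun ω' => V ω' = V ω ∧ (U ω', W ω') = (U ω, W ω))
      = pr p (fun ω' => U ω' = U ω ∧ V ω' = V ω ∧ W ω' = W ω) :=
    pr_congr fun ω' => by rw [Prod.ext_iff]; tauto
  have hUW' : pr p (fun ω' => (U ω', W ω') = (U ω, W ω))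
      = pr p (fun ω' => U ω' = U ω ∧ W ω' = W ω) :=
    pr_congr fun ω' => Prod.ext_iff
  rw [hVUW, hUW', Real.log_div (by positivity) (by positivity), Real.log_mul hUVW.ne' hW.ne',
    Real.log_mul hUW.ne' hVW.ne', Real.log_div hUVW.ne' hUW.ne', Real.log_div hVW.ne' hW.ne']
  ring

lemma condMutualInfo_comm (U : Ω → α) (V : Ω → β) (W : Ω → γ) :
    condMutualInfo p U V W = condMutualInfo p V U W := by
  refine sum_congr rfl fun ω _ => ?_
  rw [pr_congr (F := fun ω' => V ω' = V ω ∧ U ω' = U ω ∧ W ω' = W ω) fun ω' => by tauto,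
    mul_comm (pr p fun ω' => V ω' = V ω ∧ W ω' = W ω)]

lemma condEntropy_le_of_determines [Fintype α] [Fintype β] [Fintype γ]
    (hp0 : ∀ ω, 0 ≤ p ω) (hp1 : ∑ ω, p ω = 1) (U : Ω → α) {W : Ω → β} {W' : Ω → γ}
    (h : ∀ ω ω', W' ω' = W' ω → W ω' = W ω) :
    condEntropy p U W' ≤ condEntropy p U W := by
  have hpair : condEntropy p U (fun ω => (W' ω, W ω)) = condEntropy p U W' :=
    condEntropy_congr U fun ω ω' => ⟨fun h' => (Prod.ext_iff.1 h').1,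
      fun h' => Prod.ext h' (h ω ω' h')⟩
  have := condMutualInfo_nonneg hp0 hp1 W' U W
  rw [condMutualInfo_eq_condEntropy_sub hp0, hpair] at this
  linarith

lemma condEntropy_le_entropy [Fintype α] [Fintype β] (hp0 : ∀ ω, 0 ≤ p ω)
    (hp1 : ∑ ω, p ω = 1) (U : Ω → α) (W : Ω → β) :
    condEntropy p U W ≤ entropy p U := by
  rw [← condEntropy_eq_entropy_of_forall_eq hp1 U (W := fun _ => ()) fun _ _ => rfl]
  exact condEntropy_le_of_determines hp0 hp1 U fun _ _ _ => rfl

end Entropy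

section ChainRule

variable {Ω α β γ σ : Type*} [Fintype Ω] {p : Ω → ℝ}

lemma condMutualInfo_sub_condMutualInfo_prod (hp0 : ∀ ω, 0 ≤ p ω)
    (U : Ω → α) (V : Ω → β) (W : Ω → γ) (S : Ω → σ) :
    condMutualInfo p U V W - condMutualInfo p U V (fun ω => (W ω, S ω))
      = condMutualInfo p S V W - condMutualInfo p S V (fun ω => (U ω, W ω)) := by
  have hSW : condEntropy p V (fun ω => (S ω, W ω)) = condEntropy p V (fun ω => (W ω, S ω)) :=
    condEntropy_congr V fun ω ω' => by simp only [Prod.ext_iff]; tauto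
  have hSUW : condEntropy p V (fun ω => (S ω, U ω, W ω))
      = condEntropy p V (fun ω => (U ω, W ω, S ω)) :=
    condEntropy_congr V fun ω ω' => by simp only [Prod.ext_iff]; tauto
  simp only [condMutualInfo_eq_condEntropy_sub hp0, hSW, hSUW]
  ring

lemma condMutualInfo_eq_condEntropy_sub_condEntropy_of_iff (hp0 : ∀ ω, 0 ≤ p ω)
    (S : Ω → σ) (V : Ω → α) (W : Ω → β) {W' : Ω → γ}
    (h : ∀ ω ω', W' ω' = W' ω ↔ V ω' = V ω ∧ W ω' = W ω) :
    condMutualInfo p S V W = condEntropy p S W - condEntropy p S W' := by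
  rw [condMutualInfo_comm, condMutualInfo_eq_condEntropy_sub hp0]
  exact congrArg _ (condEntropy_congr S fun ω ω' => by rw [Prod.ext_iff, h])

lemma condMutualInfo_le_condEntropy_sub_condEntropy_of_determines
    [Fintype α] [Fintype β] [Fintype γ] [Fintype σ] (hp0 : ∀ ω, 0 ≤ p ω) (hp1 : ∑ ω, p ω = 1)
    (S : Ω → σ) (V : Ω → α) (W : Ω → β) {W' : Ω → γ}
    (h : ∀ ω ω', W' ω' = W' ω → V ω' = V ω ∧ W ω' = W ω) :
    condMutualInfo p S V W ≤ condEntropy p S W - condEntropy p S W' := by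
  rw [condMutualInfo_comm, condMutualInfo_eq_condEntropy_sub hp0]
  exact sub_le_sub_left
    (condEntropy_le_of_determines hp0 hp1 S fun ω ω' h' => Prod.ext_iff.2 (h ω ω' h')) _

lemma sum_condMutualInfo_eq_of_iff {β : ℕ → Type*} (hp0 : ∀ ω, 0 ≤ p ω) (S : Ω → σ)
    (V : ℕ → Ω → α) (W : (i : ℕ) → Ω → β i)
    (h : ∀ i ω ω', W (i + 1) ω' = W (i + 1) ω ↔ V i ω' = V i ω ∧ W i ω' = W i ω) (n : ℕ) :
    ∑ i ∈ range n, condMutualInfo p S (V i) (W i)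
      = condEntropy p S (W 0) - condEntropy p S (W n) := by
  rw [← sum_range_sub' (fun i => condEntropy p S (W i))]
  exact sum_congr rfl fun i _ =>
    condMutualInfo_eq_condEntropy_sub_condEntropy_of_iff hp0 S (V i) (W i) (h i)

lemma sum_condMutualInfo_le_of_determines {β : ℕ → Type*} [Fintype α] [∀ i, Fintype (β i)]
    [Fintype σ] (hp0 : ∀ ω, 0 ≤ p ω) (hp1 : ∑ ω, p ω = 1) (S : Ω → σ)
    (V : ℕ → Ω → α) (W : (i : ℕ) → Ω → β i)
    (h : ∀ i ω ω', W (i + 1) ω' = W (i + 1) ω → V i ω' = V i ω ∧ W i ω' = W i ω) (n : ℕ) :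
    ∑ i ∈ range n, condMutualInfo p S (V i) (W i)
      ≤ condEntropy p S (W 0) - condEntropy p S (W n) := by
  rw [← sum_range_sub' (fun i => condEntropy p S (W i))]
  exact sum_le_sum fun i _ =>
    condMutualInfo_le_condEntropy_sub_condEntropy_of_determines hp0 hp1 S (V i) (W i) (h i)

end ChainRule

lemma prefixSeq_succ_eq_iff {Ω 𝒳 : Type*} (X : Ω → ℕ → 𝒳) (i : ℕ) (ω ω' : Ω) :
    prefixSeq X (i + 1) ω' = prefixSeq X (i + 1) ω ↔
      X ω' i = X ω i ∧ prefixSeq X i ω' = prefixSeq X i ω := by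
  simp only [funext_iff, prefixSeq, Fin.forall_fin_succ', Fin.val_castSucc, Fin.val_last]
  tauto

/-- `|I(X^n→Y^n) − I(X^n→Y^n | S)| ≤ H(S) ≤ log|𝒮|`,
where `I(X^n→Y^n | S) = Σ_{i=1}^n I(X^i; Y_i | Y^{i-1}, S)`. -/
theorem abs_directedInfo_sub_condDirectedInfo_le
    {Ω 𝒳 𝒴 𝒮 : Type*} [Fintype Ω] [Fintype 𝒳] [Fintype 𝒴] [Fintype 𝒮]
    (p : Ω → ℝ) (hp0 : ∀ ω, 0 ≤ p ω) (hp1 : ∑ ω, p ω = 1)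
    (X : Ω → ℕ → 𝒳) (Y : Ω → ℕ → 𝒴) (S : Ω → 𝒮) (n : ℕ) :
    |directedInfo p X Y n -
        ∑ i ∈ Finset.range n,
          condMutualInfo p (prefixSeq X (i + 1)) (fun ω => Y ω i)
            (fun ω => (prefixSeq Y i ω, S ω))| ≤ entropy p S ∧
      entropy p S ≤ Real.log (Fintype.card 𝒮) := by
  set A := ∑ i ∈ range n, condMutualInfo p S (fun ω => Y ω i) (prefixSeq Y i)
  set B := ∑ i ∈ range n, condMutualInfo p S (fun ω => Y ω i)
    (fun ω => (prefixSeq X (i + 1) ω, prefixSeq Y i ω))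
  have hdiff : directedInfo p X Y n - ∑ i ∈ range n, condMutualInfo p (prefixSeq X (i + 1))
      (fun ω => Y ω i) (fun ω => (prefixSeq Y i ω, S ω)) = A - B := by
    rw [directedInfo, ← sum_sub_distrib, ← sum_sub_distrib]
    exact sum_congr rfl fun i _ => condMutualInfo_sub_condMutualInfo_prod hp0 _ _ _ S
  have hA : A = entropy p S - condEntropy p S (prefixSeq Y n) := by
    refine (sum_condMutualInfo_eq_of_iff hp0 S (fun i ω => Y ω i) (prefixSeq Y)
      (fun i ω ω' => prefixSeq_succ_eq_iff Y i ω ω') n).trans ?_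
    rw [condEntropy_eq_entropy_of_forall_eq hp1 S fun _ _ => Subsingleton.elim _ _]
  have hB : B ≤ condEntropy p S (fun ω => (prefixSeq X 1 ω, prefixSeq Y 0 ω))
      - condEntropy p S (fun ω => (prefixSeq X (n + 1) ω, prefixSeq Y n ω)) := by
    refine sum_condMutualInfo_le_of_determines hp0 hp1 S (fun i ω => Y ω i)
      (fun i ω => (prefixSeq X (i + 1) ω, prefixSeq Y i ω)) (fun i ω ω' h => ?_) n
    simp only [Prod.ext_iff, prefixSeq_succ_eq_iff] at h ⊢
    tauto
  refine ⟨?_, entropy_le_log_card hp0 hp1 S⟩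
  rw [hdiff]
  refine abs_sub_le_of_nonneg_of_le (sum_nonneg fun i _ => condMutualInfo_nonneg hp0 hp1 _ _ _)
    ?_ (sum_nonneg fun i _ => condMutualInfo_nonneg hp0 hp1 _ _ _) ?_
  · linarith [condEntropy_nonneg hp0 S (prefixSeq Y n)]
  · linarith [condEntropy_nonneg hp0 S (fun ω => (prefixSeq X (n + 1) ω, prefixSeq Y n ω)),
      condEntropy_le_entropy hp0 hp1 S (fun ω => (prefixSeq X 1 ω, prefixSeq Y 0 ω))]
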